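/- arXiv:1706.01633 — 4 statements merged into one kernel-verified Lean document; each statement's English description precedes it below -/
import Mathlib

section
/- Let G be a finite directed weighted graph satisfying the Kirchhoff assumption, with vertex weight m. Then the adjoint of the Laplacian Δ_G with respect to the inner product (·,·)_m is given explicitly by Δ*_G f(x) = (1/m(x)) Σ_{y : b(y,x)>0} b(y,x)(f(x) − f(y)) for every f : V → ℂ and every x ∈ V. -/
open Finset

/-- The weighted inner product `(f,g)_m = ∑_x m(x) f(x) conj(g(x))` on functions `V → ℂ`. -/
noncomputable def innerM {V : Type*} [Fintype V] (m : V → ℝ) (f g : V → ℂ) : ℂ :=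
  ∑ x, (m x : ℂ) * f x * (starRingEnd ℂ) (g x)

/-- The (generally non-symmetric) graph Laplacian
`Δ f(x) = (1/m(x)) ∑_y b(x,y) (f(x) - f(y))`. -/
noncomputable def lapDelta {V : Type*} [Fintype V] (m : V → ℝ) (b : V → V → ℝ)
    (f : V → ℂ) (x : V) : ℂ :=
  (1 / (m x : ℂ)) * ∑ y, ((b x y : ℝ) : ℂ) * (f x - f y)

/-- for a finite directed weighted graph satisfying the Kirchhoff assumption,
the adjoint of the Laplacian `Δ_G` with respect to `(·,·)_m` is given by
`Δ*_G f(x) = (1/m(x)) ∑_{y : b(y,x) > 0} b(y,x) (f(x) - f(y))`. -/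
theorem stmt0 {V : Type*} [Fintype V] (m : V → ℝ) (b : V → V → ℝ)
    (hm : ∀ x, 0 < m x)
    (hb : ∀ x y, 0 ≤ b x y) (hloop : ∀ x, b x x = 0)
    (hconn : ∀ x y : V, Relation.ReflTransGen (fun u v => 0 < b u v ∨ 0 < b v u) x y)
    (hkirch : ∀ x, ∑ y, b x y = ∑ y, b y x)
    (T : (V → ℂ) → (V → ℂ))
    (hT : ∀ f g : V → ℂ, innerM m (lapDelta m b f) g = innerM m f (T g)) :
    ∀ (f : V → ℂ) (x : V),
      T f x = (1 / (m x : ℂ)) *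
        ∑ y ∈ univ.filter (fun y => 0 < b y x), ((b y x : ℝ) : ℂ) * (f x - f y) := by
  classical
  intro g x
  have hmx : (m x : ℂ) ≠ 0 := by exact_mod_cast (hm x).ne'
  set δ : V → ℂ := fun z => if z = x then (1:ℂ) else 0 with hδ
  have key := hT δ g
  have hR : innerM m δ (T g) = (m x : ℂ) * (starRingEnd ℂ) (T g x) := by
    unfold innerM
    rw [Finset.sum_eq_single x]
    · simp [hδ]
    · intro z _ hz; simp [hδ, hz]
    · intro h; exact absurd (mem_univ x) h
  have hL : innerM m (lapDelta m b δ) g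
      = ∑ y, ((b y x : ℝ) : ℂ) * ((starRingEnd ℂ) (g x) - (starRingEnd ℂ) (g y)) := by
    unfold innerM lapDelta
    have step1 : ∀ z : V,
        (m z : ℂ) * ((1 / (m z : ℂ)) * ∑ y, ((b z y : ℝ) : ℂ) * (δ z - δ y)) *
          (starRingEnd ℂ) (g z)
        = δ z * (∑ y, ((b z y : ℝ) : ℂ)) * (starRingEnd ℂ) (g z)
          - ((b z x : ℝ) : ℂ) * (starRingEnd ℂ) (g z) := by
      intro z
      have hmz : (m z : ℂ) ≠ 0 := by exact_mod_cast (hm z).ne'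
      have h1 : ∑ y, ((b z y : ℝ) : ℂ) * (δ z - δ y)
          = δ z * (∑ y, ((b z y : ℝ) : ℂ)) - ((b z x : ℝ) : ℂ) := by
        have h2 : ∑ y, ((b z y : ℝ) : ℂ) * δ y = ((b z x : ℝ) : ℂ) := by
          rw [Finset.sum_eq_single x]
          · simp [hδ]
          · intro y _ hy; simp [hδ, hy]
          · intro h; exact absurd (mem_univ x) h
        simp only [mul_sub]
        rw [Finset.sum_sub_distrib, h2, ← Finset.sum_mul, mul_comm]
      rw [h1]
      field_simp
    rw [Finset.sum_congr rfl (fun z _ => step1 z), Finset.sum_sub_distrib]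
    have hA : ∑ z, δ z * (∑ y, ((b z y : ℝ) : ℂ)) * (starRingEnd ℂ) (g z)
        = (∑ y, ((b x y : ℝ) : ℂ)) * (starRingEnd ℂ) (g x) := by
      rw [Finset.sum_eq_single x]
      · simp [hδ]
      · intro z _ hz; simp [hδ, hz]
      · intro h; exact absurd (mem_univ x) h
    rw [hA]
    have hk : (∑ y, ((b x y : ℝ) : ℂ)) = ∑ y, ((b y x : ℝ) : ℂ) := by
      rw [← Complex.ofReal_sum, ← Complex.ofReal_sum, hkirch x]
    rw [hk]
    simp only [mul_sub, Finset.sum_sub_distrib, Finset.sum_mul]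
  have hTg : (starRingEnd ℂ) (T g x)
      = (1 / (m x : ℂ)) * ∑ y, ((b y x : ℝ) : ℂ)
        * ((starRingEnd ℂ) (g x) - (starRingEnd ℂ) (g y)) := by
    rw [hR, hL] at key
    field_simp at key ⊢
    linear_combination -key
  have hT2 : T g x = (1 / (m x : ℂ)) * ∑ y, ((b y x : ℝ) : ℂ) * (g x - g y) := by
    have := congrArg (starRingEnd ℂ) hTg
    rw [starRingEnd_self_apply] at this
    rw [this]
    push_cast
    rw [map_mul, map_sum]
    congr 1
    · simp
    · refine Finset.sum_congr rfl fun y _ => ?_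
      rw [map_mul, map_sub]
      simp
  rw [hT2]
  congr 1
  rw [Finset.sum_filter]
  refine Finset.sum_congr rfl fun y _ => ?_
  split
  · rfl
  · rename_i h
    have : b y x = 0 := le_antisymm (not_lt.mp h) (hb y x)
    simp [this]
end

section
/- Green's formula: for a finite directed weighted graph G satisfying the Kirchhoff assumption and any two functions f, g : V → ℂ, one has (Δ_G f, g)_m + (Δ*_G f, g)_m = Σ_{(x,y)∈E⃗} b(x,y) (f(x) − f(y)) · conj(g(x) − g(y)). -/
open Finset

lemma lap_inner {V : Type*} [Fintype V] (m : V → ℝ) (b : V → V → ℝ)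
    (hm : ∀ x, 0 < m x) (f g : V → ℂ) :
    innerM m (lapDelta m b f) g
      = ∑ x, ∑ y, ((b x y : ℝ) : ℂ) * (f x - f y) * (starRingEnd ℂ) (g x) := by
  unfold innerM lapDelta
  refine Finset.sum_congr rfl fun x _ => ?_
  have hmx : ((m x : ℂ)) ≠ 0 := by
    exact_mod_cast (hm x).ne'
  have : (m x : ℂ) * ((1 / (m x : ℂ)) * ∑ y, ((b x y : ℝ) : ℂ) * (f x - f y))
      * (starRingEnd ℂ) (g x)
      = (∑ y, ((b x y : ℝ) : ℂ) * (f x - f y)) * (starRingEnd ℂ) (g x) := by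
    field_simp
  rw [this, Finset.sum_mul]

lemma innerM_conj {V : Type*} [Fintype V] (m : V → ℝ) (f g : V → ℂ) :
    innerM m f g = (starRingEnd ℂ) (innerM m g f) := by
  unfold innerM
  rw [map_sum]
  refine Finset.sum_congr rfl fun x _ => ?_
  simp only [map_mul, Complex.conj_conj, Complex.conj_ofReal]
  ring

/-- Green's formula: for a finite directed weighted graph satisfying the
Kirchhoff assumption, for all `f g : V → ℂ`,
`(Δ f, g)_m + (Δ* f, g)_m = ∑_{(x,y) ∈ E⃗} b(x,y) (f(x)-f(y)) conj(g(x)-g(y))`,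
where `Δ*` is the adjoint of `Δ` with respect to `(·,·)_m`. -/
theorem stmt1 {V : Type*} [Fintype V] (m : V → ℝ) (b : V → V → ℝ)
    (hm : ∀ x, 0 < m x)
    (hb : ∀ x y, 0 ≤ b x y) (hloop : ∀ x, b x x = 0)
    (hconn : ∀ x y : V, Relation.ReflTransGen (fun u v => 0 < b u v ∨ 0 < b v u) x y)
    (hkirch : ∀ x, ∑ y, b x y = ∑ y, b y x)
    (T : (V → ℂ) → (V → ℂ))
    (hT : ∀ f g : V → ℂ, innerM m (lapDelta m b f) g = innerM m f (T g)) :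
    ∀ f g : V → ℂ,
      innerM m (lapDelta m b f) g + innerM m (T f) g =
        ∑ p ∈ univ.filter (fun p : V × V => 0 < b p.1 p.2),
          ((b p.1 p.2 : ℝ) : ℂ) * (f p.1 - f p.2) * (starRingEnd ℂ) (g p.1 - g p.2) := by
  intro f g
  have h1 := lap_inner m b hm f g
  have h2 : innerM m (T f) g
      = ∑ x, ∑ y, ((b x y : ℝ) : ℂ) * f x * (starRingEnd ℂ) (g x - g y) := by
    rw [innerM_conj, ← hT g f, lap_inner m b hm g f, map_sum]
    refine Finset.sum_congr rfl fun x _ => ?_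
    rw [map_sum]
    refine Finset.sum_congr rfl fun y _ => ?_
    simp only [map_mul, map_sub, Complex.conj_conj, Complex.conj_ofReal]
    ring
  rw [h1, h2]
  have hRHS : ∑ p ∈ univ.filter (fun p : V × V => 0 < b p.1 p.2),
      ((b p.1 p.2 : ℝ) : ℂ) * (f p.1 - f p.2) * (starRingEnd ℂ) (g p.1 - g p.2)
      = ∑ x, ∑ y, ((b x y : ℝ) : ℂ) * (f x - f y) * (starRingEnd ℂ) (g x - g y) := by
    rw [Finset.sum_filter, Fintype.sum_prod_type]
    refine Finset.sum_congr rfl fun x _ => Finset.sum_congr rfl fun y _ => ?_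
    by_cases h : 0 < b x y
    · simp [h]
    · have hz : b x y = 0 := le_antisymm (not_lt.1 h) (hb x y)
      simp [h, hz]
  rw [hRHS]
  -- Kirchhoff: ∑∑ b x y F x = ∑∑ b x y F y where F x = f x * conj (g x)
  set F : V → ℂ := fun x => f x * (starRingEnd ℂ) (g x) with hF
  have hkirchC : ∀ x, (∑ y, ((b x y : ℝ) : ℂ)) = ∑ y, ((b y x : ℝ) : ℂ) := by
    intro x
    exact_mod_cast congrArg (fun r : ℝ => (r : ℂ)) (hkirch x)
  have key : (∑ x, ∑ y, ((b x y : ℝ) : ℂ) * F x)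
      = ∑ x, ∑ y, ((b x y : ℝ) : ℂ) * F y := by
    calc (∑ x, ∑ y, ((b x y : ℝ) : ℂ) * F x)
        = ∑ x, (∑ y, ((b x y : ℝ) : ℂ)) * F x := by
          refine Finset.sum_congr rfl fun x _ => ?_
          rw [Finset.sum_mul]
      _ = ∑ x, (∑ y, ((b y x : ℝ) : ℂ)) * F x := by
          refine Finset.sum_congr rfl fun x _ => ?_
          rw [hkirchC x]
      _ = ∑ x, ∑ y, ((b y x : ℝ) : ℂ) * F x := by
          refine Finset.sum_congr rfl fun x _ => ?_
          rw [Finset.sum_mul]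
      _ = ∑ y, ∑ x, ((b y x : ℝ) : ℂ) * F x := Finset.sum_comm
  calc (∑ x, ∑ y, ((b x y : ℝ) : ℂ) * (f x - f y) * (starRingEnd ℂ) (g x))
        + ∑ x, ∑ y, ((b x y : ℝ) : ℂ) * f x * (starRingEnd ℂ) (g x - g y)
      = ∑ x, ∑ y, (((b x y : ℝ) : ℂ) * (f x - f y) * (starRingEnd ℂ) (g x - g y)
          + (((b x y : ℝ) : ℂ) * F x - ((b x y : ℝ) : ℂ) * F y)) := by
        rw [← Finset.sum_add_distrib]
        refine Finset.sum_congr rfl fun x _ => ?_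
        rw [← Finset.sum_add_distrib]
        refine Finset.sum_congr rfl fun y _ => ?_
        simp only [hF, map_sub]
        ring
    _ = (∑ x, ∑ y, ((b x y : ℝ) : ℂ) * (f x - f y) * (starRingEnd ℂ) (g x - g y))
          + ((∑ x, ∑ y, ((b x y : ℝ) : ℂ) * F x) - ∑ x, ∑ y, ((b x y : ℝ) : ℂ) * F y) := by
        simp [Finset.sum_add_distrib, Finset.sum_sub_distrib]
    _ = ∑ x, ∑ y, ((b x y : ℝ) : ℂ) * (f x - f y) * (starRingEnd ℂ) (g x - g y) := by
        rw [key]; ring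
end

section
/- For a finite connected directed weighted graph G satisfying the Kirchhoff assumption, 0 is a simple eigenvalue of the self-adjoint operator S_G = Δ_G + Δ*_G: the constant functions are eigenfunctions for the eigenvalue 0, and every eigenfunction of S_G with eigenvalue 0 is constant. -/
open Finset

/-- for a finite connected directed weighted graph satisfying the Kirchhoff
assumption, `0` is a simple eigenvalue of `S = Δ + Δ*`: the constant functions are
eigenfunctions for the eigenvalue `0` (and nonzero constants are nonzero), and every
eigenfunction of `S` with eigenvalue `0` is constant. -/
theorem stmt6 {V : Type*} [Fintype V] [Nonempty V] (m : V → ℝ) (b : V → V → ℝ)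
    (hm : ∀ x, 0 < m x)
    (hb : ∀ x y, 0 ≤ b x y) (hloop : ∀ x, b x x = 0)
    (hconn : ∀ x y : V, Relation.ReflTransGen (fun u v => 0 < b u v ∨ 0 < b v u) x y)
    (hkirch : ∀ x, ∑ y, b x y = ∑ y, b y x)
    (T : (V → ℂ) → (V → ℂ))
    (hT : ∀ f g : V → ℂ, innerM m (lapDelta m b f) g = innerM m f (T g))
    (S : (V → ℂ) → (V → ℂ))
    (hS : ∀ f x, S f x = lapDelta m b f x + T f x) :
    (∀ c : ℂ, S (fun _ => c) = fun _ => (0 : ℂ)) ∧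
    ((fun _ => (1 : ℂ)) ≠ (0 : V → ℂ)) ∧
    (∀ f : V → ℂ, S f = 0 → ∀ x y, f x = f y) := by
  classical
  have hmx : ∀ x : V, (m x : ℂ) ≠ 0 := fun x => by
    exact_mod_cast (hm x).ne'
  -- Kirchhoff identity for any g
  have key : ∀ g : V → ℂ, ∑ x, ∑ y, ((b x y : ℝ) : ℂ) * (g x - g y) = 0 := by
    intro g
    have h1 : ∑ x, ∑ y, ((b x y : ℝ) : ℂ) * (g x - g y)
        = (∑ x, ∑ y, ((b x y : ℝ) : ℂ) * g x) - ∑ x, ∑ y, ((b x y : ℝ) : ℂ) * g y := by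
      rw [← Finset.sum_sub_distrib]
      refine Finset.sum_congr rfl fun x _ => ?_
      rw [← Finset.sum_sub_distrib]
      exact Finset.sum_congr rfl fun y _ => by ring
    rw [h1, sub_eq_zero]
    have h2 : ∀ x, ∑ y, ((b x y : ℝ) : ℂ) * g x = ∑ y, ((b y x : ℝ) : ℂ) * g x := by
      intro x
      rw [← Finset.sum_mul, ← Finset.sum_mul]
      congr 1
      push_cast
      exact_mod_cast congrArg (fun r : ℝ => (r : ℂ)) (hkirch x)
    calc ∑ x, ∑ y, ((b x y : ℝ) : ℂ) * g x = ∑ x, ∑ y, ((b y x : ℝ) : ℂ) * g x :=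
          Finset.sum_congr rfl fun x _ => h2 x
      _ = ∑ y, ∑ x, ((b y x : ℝ) : ℂ) * g x := Finset.sum_comm
  -- inner product of lapDelta with anything, m's cancel
  have hlap : ∀ f g : V → ℂ, innerM m (lapDelta m b f) g
      = ∑ x, (∑ y, ((b x y : ℝ) : ℂ) * (f x - f y)) * (starRingEnd ℂ) (g x) := by
    intro f g
    unfold innerM lapDelta
    refine Finset.sum_congr rfl fun x _ => ?_
    refine congrArg (· * (starRingEnd ℂ) (g x)) ?_
    rw [← mul_assoc, mul_one_div_cancel (hmx x), one_mul]
  -- lapDelta of a constant is zero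
  have hlapc : ∀ (c : ℂ) (x : V), lapDelta m b (fun _ => c) x = 0 := by
    intro c x
    unfold lapDelta
    simp
  -- T kills constants
  have hTc : ∀ (c : ℂ) (x : V), T (fun _ => c) x = 0 := by
    intro c x
    have h := hT (fun y => if y = x then 1 else 0) (fun _ => c)
    rw [hlap] at h
    have hL : ∑ z, (∑ y, ((b z y : ℝ) : ℂ) * ((if z = x then (1:ℂ) else 0) - (if y = x then (1:ℂ) else 0))) * (starRingEnd ℂ) c
        = (∑ z, ∑ y, ((b z y : ℝ) : ℂ) * ((if z = x then (1:ℂ) else 0) - (if y = x then (1:ℂ) else 0))) * (starRingEnd ℂ) c := by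
      rw [Finset.sum_mul]
    rw [hL, key (fun z => if z = x then (1:ℂ) else 0), zero_mul] at h
    have hR : innerM m (fun y => if y = x then 1 else 0) (T fun _ => c)
        = (m x : ℂ) * (starRingEnd ℂ) (T (fun _ => c) x) := by
      unfold innerM
      rw [Finset.sum_eq_single x]
      · simp
      · intro y _ hy; simp [hy]
      · intro hx; exact absurd (Finset.mem_univ x) hx
    rw [hR] at h
    have := mul_eq_zero.mp h.symm
    rcases this with h0 | h0
    · exact absurd h0 (hmx x)
    · simpa using congrArg (starRingEnd ℂ) h0
  refine ⟨?_, ?_, ?_⟩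
  · intro c
    funext x
    rw [hS, hlapc, hTc, add_zero]
  · intro h
    have := congrFun h (Classical.arbitrary V)
    simp at this
  · intro f hSf x y
    -- conjugate symmetry of innerM
    have hconj : ∀ g h : V → ℂ, (starRingEnd ℂ) (innerM m g h) = innerM m h g := by
      intro g h
      unfold innerM
      rw [map_sum]
      refine Finset.sum_congr rfl fun z _ => ?_
      simp [Complex.conj_ofReal]
      ring
    set A : ℂ := ∑ x, (∑ y, ((b x y : ℝ) : ℂ) * (f x - f y)) * (starRingEnd ℂ) (f x) with hA
    have hSf0 : innerM m (S f) f = 0 := by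
      rw [hSf]; unfold innerM; simp
    have hexp : innerM m (S f) f = A + (starRingEnd ℂ) A := by
      have h1 : innerM m (S f) f = innerM m (lapDelta m b f) f + innerM m (T f) f := by
        unfold innerM
        rw [← Finset.sum_add_distrib]
        refine Finset.sum_congr rfl fun z _ => ?_
        rw [hS]; ring
      have h2 : innerM m (T f) f = (starRingEnd ℂ) A := by
        rw [← hconj f (T f), ← hT f f, hlap, ← hA]
      rw [h1, h2, hlap, ← hA]
    have hA0 : A + (starRingEnd ℂ) A = 0 := by rw [← hexp, hSf0]
    -- A + conj A equals the real quadratic form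
    have comb : ∀ (F G : V → V → ℂ), (∑ x, ∑ y, F x y) + (∑ x, ∑ y, G x y)
        = ∑ x, ∑ y, (F x y + G x y) := by
      intro F G
      rw [← Finset.sum_add_distrib]
      exact Finset.sum_congr rfl fun x _ => Finset.sum_add_distrib.symm
    have hform : A + (starRingEnd ℂ) A
        = ∑ x, ∑ y, ((b x y : ℝ) : ℂ) * ((f x - f y) * (starRingEnd ℂ) (f x - f y)) := by
      have hAconj : (starRingEnd ℂ) A
          = ∑ x, ∑ y, ((b x y : ℝ) : ℂ) * ((starRingEnd ℂ) (f x - f y)) * (f x) := by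
        rw [hA, map_sum]
        refine Finset.sum_congr rfl fun x _ => ?_
        rw [map_mul, map_sum, Finset.sum_mul]
        refine Finset.sum_congr rfl fun y _ => ?_
        simp [Complex.conj_ofReal]
      have hAsum : A = ∑ x, ∑ y, ((b x y : ℝ) : ℂ) * (f x - f y) * (starRingEnd ℂ) (f x) := by
        rw [hA]
        exact Finset.sum_congr rfl fun x _ => Finset.sum_mul _ _ _
      have hk : ∑ x, ∑ y, ((b x y : ℝ) : ℂ)
            * (f x * (starRingEnd ℂ) (f x) - f y * (starRingEnd ℂ) (f y)) = 0 :=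
        key (fun z => f z * (starRingEnd ℂ) (f z))
      rw [hAconj, hAsum, comb]
      calc ∑ x, ∑ y, (((b x y : ℝ) : ℂ) * (f x - f y) * (starRingEnd ℂ) (f x)
              + ((b x y : ℝ) : ℂ) * ((starRingEnd ℂ) (f x - f y)) * (f x))
          = ∑ x, ∑ y, (((b x y : ℝ) : ℂ) * ((f x - f y) * (starRingEnd ℂ) (f x - f y))
              + ((b x y : ℝ) : ℂ) * (f x * (starRingEnd ℂ) (f x) - f y * (starRingEnd ℂ) (f y))) := by
            refine Finset.sum_congr rfl fun x _ => Finset.sum_congr rfl fun y _ => ?_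
            simp only [map_sub]
            ring
        _ = (∑ x, ∑ y, ((b x y : ℝ) : ℂ) * ((f x - f y) * (starRingEnd ℂ) (f x - f y)))
              + ∑ x, ∑ y, ((b x y : ℝ) : ℂ)
                * (f x * (starRingEnd ℂ) (f x) - f y * (starRingEnd ℂ) (f y)) := (comb _ _).symm
        _ = ∑ x, ∑ y, ((b x y : ℝ) : ℂ) * ((f x - f y) * (starRingEnd ℂ) (f x - f y)) := by
            rw [hk, add_zero]
    -- real quadratic form vanishes
    have hreal : ∑ x, ∑ y, b x y * Complex.normSq (f x - f y) = 0 := by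
      have : ((∑ x, ∑ y, b x y * Complex.normSq (f x - f y) : ℝ) : ℂ)
          = ∑ x, ∑ y, ((b x y : ℝ) : ℂ) * ((f x - f y) * (starRingEnd ℂ) (f x - f y)) := by
        push_cast
        refine Finset.sum_congr rfl fun x _ => Finset.sum_congr rfl fun y _ => ?_
        rw [Complex.mul_conj]
      have h0 : ((∑ x, ∑ y, b x y * Complex.normSq (f x - f y) : ℝ) : ℂ) = 0 := by
        rw [this, ← hform, hA0]
      exact_mod_cast h0
    have hterm : ∀ u v : V, 0 < b u v → f u = f v := by
      intro u v huv
      have hnn : ∀ x ∈ (Finset.univ : Finset V), 0 ≤ ∑ y, b x y * Complex.normSq (f x - f y) := by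
        intro x _
        exact Finset.sum_nonneg fun y _ => mul_nonneg (hb x y) (Complex.normSq_nonneg _)
      have hx0 : ∑ y, b u y * Complex.normSq (f u - f y) = 0 :=
        (Finset.sum_eq_zero_iff_of_nonneg hnn).mp hreal u (Finset.mem_univ u)
      have hy0 : b u v * Complex.normSq (f u - f v) = 0 :=
        (Finset.sum_eq_zero_iff_of_nonneg fun y _ =>
          mul_nonneg (hb u y) (Complex.normSq_nonneg _)).mp hx0 v (Finset.mem_univ v)
      have : Complex.normSq (f u - f v) = 0 := by
        rcases mul_eq_zero.mp hy0 with h | h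
        · exact absurd h huv.ne'
        · exact h
      exact sub_eq_zero.mp (Complex.normSq_eq_zero.mp this)
    have hedge : ∀ u v : V, (0 < b u v ∨ 0 < b v u) → f u = f v := by
      rintro u v (h | h)
      · exact hterm u v h
      · exact (hterm v u h).symm
    have := hconn x y
    induction this with
    | refl => rfl
    | tail _ hstep ih => exact ih.trans (hedge _ _ hstep)
end

section
/- For a finite connected directed weighted graph G satisfying the Kirchhoff assumption, with the normalized choice of vertex weight m = β⁺ (assuming β⁺(x) > 0 for all x), the real part of every eigenvalue of the normalized Laplacian Δ̃_G lies in the interval [0,2]. -/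
open Finset

lemma aux_pair (u v : ℂ) :
    2 * ((u - v) * (starRingEnd ℂ) u).re =
      Complex.normSq (u - v) + Complex.normSq u - Complex.normSq v := by
  simp [Complex.normSq_apply, Complex.mul_re, Complex.sub_re, Complex.sub_im,
    Complex.conj_re, Complex.conj_im]
  ring

lemma aux_sq (u v : ℂ) :
    Complex.normSq (u - v) ≤ 2 * Complex.normSq u + 2 * Complex.normSq v := by
  simp only [Complex.normSq_apply, Complex.sub_re, Complex.sub_im]
  nlinarith [sq_nonneg (u.re + v.re), sq_nonneg (u.im + v.im)]

/-- for a finite connected directed weighted graph satisfying the Kirchhoff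
assumption, with the normalized vertex weight `m = β⁺` (each `β⁺(x) > 0`), the real part of
every eigenvalue of the normalized Laplacian `Δ̃` lies in `[0,2]`. -/
theorem stmt8 {V : Type*} [Fintype V] (b : V → V → ℝ)
    (hb : ∀ x y, 0 ≤ b x y) (hloop : ∀ x, b x x = 0)
    (hconn : ∀ x y : V, Relation.ReflTransGen (fun u v => 0 < b u v ∨ 0 < b v u) x y)
    (hkirch : ∀ x, ∑ y, b x y = ∑ y, b y x)
    (hpos : ∀ x, 0 < ∑ y, b x y) :
    ∀ mu : ℂ, (∃ f : V → ℂ, f ≠ 0 ∧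
        lapDelta (fun x => ∑ y, b x y) b f = fun x => mu * f x) →
      0 ≤ mu.re ∧ mu.re ≤ 2 := by
  rintro mu ⟨f, hf0, heig⟩
  set m : V → ℝ := fun x => ∑ y, b x y with hm
  have heig' : ∀ x, lapDelta m b f x = mu * f x := fun x => congrFun heig x
  have hmne : ∀ x, (m x : ℂ) ≠ 0 := fun x => by
    exact_mod_cast (hpos x).ne'
  set S : ℝ := ∑ x, m x * Complex.normSq (f x) with hS
  have hSpos : 0 < S := by
    obtain ⟨x0, hx0⟩ := Function.ne_iff.mp hf0
    refine Finset.sum_pos' (fun i _ => ?_) ⟨x0, Finset.mem_univ _, ?_⟩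
    · exact mul_nonneg (hpos i).le (Complex.normSq_nonneg _)
    · exact mul_pos (hpos x0) (Complex.normSq_pos.mpr hx0)
  -- the complex pairing identity
  have key : (∑ x, ∑ y, (b x y : ℂ) * ((f x - f y) * (starRingEnd ℂ) (f x)))
      = mu * (S : ℂ) := by
    have h1 : ∀ x, ∑ y, (b x y : ℂ) * ((f x - f y) * (starRingEnd ℂ) (f x))
        = (m x : ℂ) * (mu * f x) * (starRingEnd ℂ) (f x) := by
      intro x
      have h2 : (m x : ℂ) * lapDelta m b f x = ∑ y, (b x y : ℂ) * (f x - f y) := by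
        rw [lapDelta]
        rw [← mul_assoc, mul_one_div, div_self (hmne x), one_mul]
      calc ∑ y, (b x y : ℂ) * ((f x - f y) * (starRingEnd ℂ) (f x))
          = (∑ y, (b x y : ℂ) * (f x - f y)) * (starRingEnd ℂ) (f x) := by
            rw [Finset.sum_mul]; exact Finset.sum_congr rfl (fun y _ => by ring)
        _ = (m x : ℂ) * lapDelta m b f x * (starRingEnd ℂ) (f x) := by rw [h2]
        _ = (m x : ℂ) * (mu * f x) * (starRingEnd ℂ) (f x) := by rw [heig' x]
    rw [Finset.sum_congr rfl (fun x _ => h1 x), hS]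
    push_cast
    rw [Finset.mul_sum]
    refine Finset.sum_congr rfl (fun x _ => ?_)
    rw [← Complex.mul_conj]
    ring
  -- real part of the pairing
  have hQ : mu.re * S = ∑ x, ∑ y, b x y * ((f x - f y) * (starRingEnd ℂ) (f x)).re := by
    have h := congrArg Complex.re key
    rw [Complex.re_sum] at h
    simp only [Complex.re_sum, Complex.re_ofReal_mul] at h
    rw [h]
    simp [Complex.mul_re]
  -- symmetrization: 2 * Re pairing = energy form
  have hT : 2 * (mu.re * S) = ∑ x, ∑ y, b x y * Complex.normSq (f x - f y) := by
    rw [hQ, Finset.mul_sum]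
    have expand : ∀ x y : V, 2 * (b x y * ((f x - f y) * (starRingEnd ℂ) (f x)).re)
        = b x y * Complex.normSq (f x - f y) + b x y * Complex.normSq (f x)
          - b x y * Complex.normSq (f y) := by
      intro x y
      have h := aux_pair (f x) (f y)
      linear_combination b x y * h
    have hA : ∑ x, ∑ y, b x y * Complex.normSq (f x) = S := by
      rw [hS]
      refine Finset.sum_congr rfl (fun x _ => ?_)
      rw [← Finset.sum_mul]
    have hB : ∑ x : V, ∑ y : V, b x y * Complex.normSq (f y) = S := by
      rw [Finset.sum_comm, hS]
      refine Finset.sum_congr rfl (fun y _ => ?_)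
      rw [← Finset.sum_mul, ← hkirch y]
    calc ∑ x, 2 * ∑ y, b x y * ((f x - f y) * (starRingEnd ℂ) (f x)).re
        = ∑ x, ∑ y, (b x y * Complex.normSq (f x - f y) + b x y * Complex.normSq (f x)
            - b x y * Complex.normSq (f y)) := by
          refine Finset.sum_congr rfl (fun x _ => ?_)
          rw [Finset.mul_sum]
          exact Finset.sum_congr rfl (fun y _ => expand x y)
      _ = (∑ x, ∑ y, b x y * Complex.normSq (f x - f y))
            + (∑ x, ∑ y, b x y * Complex.normSq (f x))
            - (∑ x : V, ∑ y : V, b x y * Complex.normSq (f y)) := by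
          simp [Finset.sum_add_distrib, Finset.sum_sub_distrib]
      _ = ∑ x, ∑ y, b x y * Complex.normSq (f x - f y) := by rw [hA, hB]; ring
  have hTnn : 0 ≤ ∑ x, ∑ y, b x y * Complex.normSq (f x - f y) :=
    Finset.sum_nonneg fun x _ => Finset.sum_nonneg fun y _ =>
      mul_nonneg (hb x y) (Complex.normSq_nonneg _)
  have hTle : ∑ x, ∑ y, b x y * Complex.normSq (f x - f y) ≤ 4 * S := by
    have hA : ∑ x, ∑ y, b x y * Complex.normSq (f x) = S := by
      rw [hS]
      refine Finset.sum_congr rfl (fun x _ => ?_)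
      rw [← Finset.sum_mul]
    have hB : ∑ x : V, ∑ y : V, b x y * Complex.normSq (f y) = S := by
      rw [Finset.sum_comm, hS]
      refine Finset.sum_congr rfl (fun y _ => ?_)
      rw [← Finset.sum_mul, ← hkirch y]
    calc ∑ x, ∑ y, b x y * Complex.normSq (f x - f y)
        ≤ ∑ x, ∑ y, (2 * (b x y * Complex.normSq (f x))
            + 2 * (b x y * Complex.normSq (f y))) := by
          refine Finset.sum_le_sum fun x _ => Finset.sum_le_sum fun y _ => ?_
          have := aux_sq (f x) (f y)
          nlinarith [hb x y]
      _ = 2 * (∑ x, ∑ y, b x y * Complex.normSq (f x))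
            + 2 * (∑ x : V, ∑ y : V, b x y * Complex.normSq (f y)) := by
          simp [Finset.sum_add_distrib, Finset.mul_sum]
      _ = 4 * S := by rw [hA, hB]; ring
  constructor
  · nlinarith [hT, hTnn, hSpos]
  · nlinarith [hT, hTle, hSpos]
end
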